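/- For the superoperators E = H∘H and E' = HZ∘ZH on ℂ², the ordinary diamond norm ‖E − E'‖_⋄ equals 1. -/

import Mathlib

open Matrix ComplexOrder Kronecker

/-- The trace norm of a complex matrix: the trace of `√(Aᴴ * A)`. -/
noncomputable def traceNorm {n : Type*} [Fintype n] [DecidableEq n]
    (A : Matrix n n ℂ) : ℝ :=
  ((Matrix.posSemidef_conjTranspose_mul_self A).1.eigenvectorUnitary.1 *
    diagonal (((↑) : ℝ → ℂ) ∘ Real.sqrt ∘ (Matrix.posSemidef_conjTranspose_mul_self A).1.eigenvalues) *
    (star (Matrix.posSemidef_conjTranspose_mul_self A).1.eigenvectorUnitary :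
      Matrix n n ℂ)).trace.re

/-- The extension `Φ ⊗ id_k` of a superoperator `Φ` to a system enlarged
by an ancilla indexed by `k`: it acts blockwise on the `n`-indices. -/
noncomputable def tensorExt {n : Type*} [Fintype n]
    (Φ : Matrix n n ℂ →ₗ[ℂ] Matrix n n ℂ) (k : Type*)
    (M : Matrix (n × k) (n × k) ℂ) : Matrix (n × k) (n × k) ℂ :=
  fun p q => Φ (Matrix.of fun i j => M (i, p.2) (j, q.2)) p.1 q.1

/-- The `(Q, λ)`-diamond norm of the difference superoperator `Φ = E - E'`:
the supremum over density operators `ρ` on `H ⊗ H` with `tr((Q ⊗ I) ρ) ≥ λ`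
of the trace distance `½‖(Φ ⊗ id)(ρ)‖₁`. -/
noncomputable def QDiamond {n : Type*} [Fintype n] [DecidableEq n]
    (Q : Matrix n n ℂ) (lam : ℝ)
    (Φ : Matrix n n ℂ →ₗ[ℂ] Matrix n n ℂ) : ℝ :=
  sSup {x : ℝ | ∃ ρ : Matrix (n × n) (n × n) ℂ, ρ.PosSemidef ∧ ρ.trace = 1 ∧
      lam ≤ (((Q ⊗ₖ (1 : Matrix n n ℂ)) * ρ).trace).re ∧
      x = (1 / 2) * traceNorm (tensorExt Φ n ρ)}

/-- Conjugation by a matrix `U`, as a superoperator `ρ ↦ U ρ Uᴴ`. -/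
noncomputable def conjMap {n : Type*} [Fintype n] (U : Matrix n n ℂ) :
    Matrix n n ℂ →ₗ[ℂ] Matrix n n ℂ where
  toFun ρ := U * ρ * Uᴴ
  map_add' x y := by simp [Matrix.mul_add, Matrix.add_mul]
  map_smul' c x := by simp [Matrix.mul_smul, Matrix.smul_mul]

/-- The ordinary diamond norm: the `(Q,λ)`-diamond norm with trivial
precondition `Q = I`, `λ = 0`. -/
noncomputable def Diamond {n : Type*} [Fintype n] [DecidableEq n]
    (Φ : Matrix n n ℂ →ₗ[ℂ] Matrix n n ℂ) : ℝ :=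
  QDiamond (1 : Matrix n n ℂ) 0 Φ

/-- The Hadamard gate. -/
noncomputable def Hgate : Matrix (Fin 2) (Fin 2) ℂ :=
  ((Real.sqrt 2 : ℂ))⁻¹ • !![1, 1; 1, -1]

/-- The Pauli-Z gate. -/
def Zgate : Matrix (Fin 2) (Fin 2) ℂ := !![1, 0; 0, -1]

/-!
Both channels are conjugations by unitaries `U`, `V`, so for a density operator `ρ` the output
`(U ⊗ 1) ρ (U ⊗ 1)ᴴ - (V ⊗ 1) ρ (V ⊗ 1)ᴴ` is a difference of two density operators; writing it in
an eigenbasis shows that its trace norm is at most `2`. The bound is attained at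
`ρ = |+0⟩⟨+0|`, because `H` and `HZ` send `|+⟩` to the orthogonal states `|0⟩` and `|1⟩`.
-/

open scoped MatrixOrder

lemma trace_mul_mul_conjTranspose_of_mem_unitary {n R : Type*} [Fintype n] [DecidableEq n]
    [CommSemiring R] [StarRing R] {W : Matrix n n R} (hW : W ∈ unitary (Matrix n n R))
    (M : Matrix n n R) : (W * M * Wᴴ).trace = M.trace := by
  rw [trace_mul_cycle, ← star_eq_conjTranspose, Unitary.star_mul_self_of_mem hW, one_mul]

lemma mul_vecMulVec_star_mul_conjTranspose {m n R : Type*} [Fintype n] [CommSemiring R]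
    [StarRing R] (W : Matrix m n R) (v : n → R) :
    W * vecMulVec v (star v) * Wᴴ = vecMulVec (W *ᵥ v) (star (W *ᵥ v)) := by
  rw [mul_vecMulVec, vecMulVec_mul, star_mulVec]

section TraceNorm

variable {n : Type*} [Fintype n] [DecidableEq n]

lemma Matrix.IsHermitian.trace_cfc {A : Matrix n n ℂ} (hA : A.IsHermitian) (f : ℝ → ℝ) :
    (cfc f A).trace = ∑ i, (f (hA.eigenvalues i) : ℂ) := by
  rw [hA.cfc_eq, IsHermitian.cfc, Unitary.conjStarAlgAut_apply, trace_mul_cycle,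
    Unitary.coe_star_mul_self, one_mul, trace_diagonal]
  rfl

lemma traceNorm_eq_re_trace_cfc_sqrt (A : Matrix n n ℂ) :
    traceNorm A = (cfc Real.sqrt (Aᴴ * A)).trace.re := by
  rw [(posSemidef_conjTranspose_mul_self A).1.cfc_eq]
  rfl

lemma traceNorm_eq_re_trace_of_sq_eq {A S : Matrix n n ℂ} (hS : 0 ≤ S) (h : S ^ 2 = Aᴴ * A) :
    traceNorm A = S.trace.re := by
  rw [traceNorm_eq_re_trace_cfc_sqrt, ← h, ← cfcₙ_eq_cfc,
    ← CFC.sqrt_eq_real_sqrt _ (h ▸ (posSemidef_conjTranspose_mul_self A).nonneg), CFC.sqrt_sq S]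

lemma traceNorm_diagonal (d : n → ℝ) :
    traceNorm (diagonal (fun i => (d i : ℂ))) = ∑ i, |d i| := by
  have hS : 0 ≤ diagonal (fun i => ((|d i| : ℝ) : ℂ)) :=
    (posSemidef_diagonal_iff.mpr fun i => by simp [Complex.le_def]).nonneg
  rw [traceNorm_eq_re_trace_of_sq_eq hS]
  · simp [trace_diagonal]
  · rw [diagonal_conjTranspose, sq, diagonal_mul_diagonal, diagonal_mul_diagonal]
    congr 1
    ext i
    simp [← Complex.ofReal_mul, abs_mul_abs_self]

lemma Matrix.IsHermitian.traceNorm_eq_sum_abs_eigenvalues {A : Matrix n n ℂ}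
    (hA : A.IsHermitian) : traceNorm A = ∑ i, |hA.eigenvalues i| := by
  have hsq : Aᴴ * A = A ^ 2 := by rw [hA.eq, sq]
  rw [traceNorm_eq_re_trace_cfc_sqrt, hsq, ← cfc_comp_pow Real.sqrt 2 A, hA.trace_cfc]
  simp [Real.sqrt_sq_eq_abs]

lemma Matrix.PosSemidef.traceNorm_sub_le {X Y : Matrix n n ℂ} (hX : X.PosSemidef)
    (hY : Y.PosSemidef) : traceNorm (X - Y) ≤ X.trace.re + Y.trace.re := by
  have hM : (X - Y).IsHermitian := hX.1.sub hY.1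
  set W : Matrix n n ℂ := (hM.eigenvectorUnitary : Matrix n n ℂ)
  have htrace (Z : Matrix n n ℂ) : (Wᴴ * Z * W).trace = Z.trace := by
    simpa [star_eq_conjTranspose] using
      trace_mul_mul_conjTranspose_of_mem_unitary (Unitary.star_mem hM.eigenvectorUnitary.2) Z
  have hdiag : Wᴴ * X * W - Wᴴ * Y * W = diagonal (fun i => (hM.eigenvalues i : ℂ)) := by
    have := hM.conjStarAlgAut_star_eigenvectorUnitary
    rw [Unitary.conjStarAlgAut_apply, Unitary.coe_star, star_star] at this
    rw [← sub_mul, ← mul_sub]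
    exact this
  -- `λᵢ` is the difference of the nonnegative diagonal entries of `X` and `Y` in the eigenbasis.
  have hbound (i : n) :
      |hM.eigenvalues i| ≤ ((Wᴴ * X * W) i i).re + ((Wᴴ * Y * W) i i).re := by
    have hi : ((Wᴴ * X * W) i i).re - ((Wᴴ * Y * W) i i).re = hM.eigenvalues i := by
      simpa using congrArg (fun A => (A i i).re) hdiag
    have hXi := (Complex.nonneg_iff.mp ((hX.conjTranspose_mul_mul_same W).diag_nonneg (i := i))).1
    have hYi := (Complex.nonneg_iff.mp ((hY.conjTranspose_mul_mul_same W).diag_nonneg (i := i))).1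
    exact abs_le.mpr ⟨by linarith, by linarith⟩
  rw [hM.traceNorm_eq_sum_abs_eigenvalues, ← htrace X, ← htrace Y, trace, trace,
    Complex.re_sum, Complex.re_sum, ← Finset.sum_add_distrib]
  exact Finset.sum_le_sum fun i _ => hbound i

end TraceNorm

section Superoperator

variable {n k : Type*} [Fintype n]

lemma tensorExt_sub (Φ Ψ : Matrix n n ℂ →ₗ[ℂ] Matrix n n ℂ) (M : Matrix (n × k) (n × k) ℂ) :
    tensorExt (Φ - Ψ) k M = tensorExt Φ k M - tensorExt Ψ k M :=
  rfl

variable [Fintype k] [DecidableEq k]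

lemma tensorExt_conjMap (U : Matrix n n ℂ) (M : Matrix (n × k) (n × k) ℂ) :
    tensorExt (conjMap U) k M = (U ⊗ₖ (1 : Matrix k k ℂ)) * M * (U ⊗ₖ (1 : Matrix k k ℂ))ᴴ := by
  ext ⟨i, a⟩ ⟨j, b⟩
  simp only [tensorExt, conjMap, LinearMap.coe_mk, AddHom.coe_mk, mul_apply,
    conjTranspose_apply, kroneckerMap_apply, of_apply, Fintype.sum_prod_type, one_apply,
    mul_ite, ite_mul, mul_zero, zero_mul, mul_one, Finset.sum_ite_eq, Finset.mem_univ, if_true,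
    apply_ite (star : ℂ → ℂ), star_zero]

lemma half_traceNorm_tensorExt_conjMap_sub_le_one [DecidableEq n] {U V : Matrix n n ℂ}
    (hU : U ∈ unitary (Matrix n n ℂ)) (hV : V ∈ unitary (Matrix n n ℂ))
    {ρ : Matrix (n × k) (n × k) ℂ} (hρ : ρ.PosSemidef) (htr : ρ.trace = 1) :
    1 / 2 * traceNorm (tensorExt (conjMap U - conjMap V) k ρ) ≤ 1 := by
  have htr_conj {W : Matrix n n ℂ} (hW : W ∈ unitary (Matrix n n ℂ)) :
      ((W ⊗ₖ (1 : Matrix k k ℂ)) * ρ * (W ⊗ₖ (1 : Matrix k k ℂ))ᴴ).trace = 1 := by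
    rw [trace_mul_mul_conjTranspose_of_mem_unitary (kronecker_mem_unitary hW (one_mem _)), htr]
  have h := (hρ.mul_mul_conjTranspose_same (U ⊗ₖ (1 : Matrix k k ℂ))).traceNorm_sub_le
    (hρ.mul_mul_conjTranspose_same (V ⊗ₖ (1 : Matrix k k ℂ)))
  rw [htr_conj hU, htr_conj hV, Complex.one_re] at h
  rw [tensorExt_sub, tensorExt_conjMap, tensorExt_conjMap]
  linarith

end Superoperator

lemma inv_sqrt_two_mul_self : (Real.sqrt 2 : ℂ)⁻¹ * (Real.sqrt 2 : ℂ)⁻¹ = 2⁻¹ := by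
  rw [← mul_inv, ← Complex.ofReal_mul, Real.mul_self_sqrt zero_le_two, Complex.ofReal_ofNat]

lemma Hgate_mem_unitary : Hgate ∈ unitary (Matrix (Fin 2) (Fin 2) ℂ) := by
  rw [mem_unitaryGroup_iff']
  ext i j
  fin_cases i <;> fin_cases j <;>
    norm_num [Hgate, mul_apply, Fin.sum_univ_two, inv_sqrt_two_mul_self]

lemma Zgate_mem_unitary : Zgate ∈ unitary (Matrix (Fin 2) (Fin 2) ℂ) := by
  rw [mem_unitaryGroup_iff']
  ext i j
  fin_cases i <;> fin_cases j <;> simp [Zgate, mul_apply, Fin.sum_univ_two]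

/-- The state `|+⟩ ⊗ |0⟩`, indexed as (system, ancilla). -/
noncomputable def plusZero : Fin 2 × Fin 2 → ℂ :=
  fun p => if p.2 = 0 then (Real.sqrt 2 : ℂ)⁻¹ else 0

lemma trace_vecMulVec_plusZero : (vecMulVec plusZero (star plusZero)).trace = 1 := by
  norm_num [trace, plusZero, vecMulVec_apply, Fintype.sum_prod_type, inv_sqrt_two_mul_self]

lemma Hgate_kronecker_one_mulVec_plusZero :
    (Hgate ⊗ₖ (1 : Matrix (Fin 2) (Fin 2) ℂ)) *ᵥ plusZero = Pi.single (0, 0) 1 := by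
  ext ⟨i, a⟩
  fin_cases i <;> fin_cases a <;>
    norm_num [Hgate, plusZero, mulVec, dotProduct, Fintype.sum_prod_type, inv_sqrt_two_mul_self,
      Pi.single_apply]

lemma HZgate_kronecker_one_mulVec_plusZero :
    ((Hgate * Zgate) ⊗ₖ (1 : Matrix (Fin 2) (Fin 2) ℂ)) *ᵥ plusZero = Pi.single (1, 0) 1 := by
  ext ⟨i, a⟩
  fin_cases i <;> fin_cases a <;>
    norm_num [Hgate, Zgate, plusZero, mulVec, dotProduct, Fintype.sum_prod_type,
      inv_sqrt_two_mul_self, Pi.single_apply]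

lemma tensorExt_H_sub_HZ_plusZero :
    tensorExt (conjMap Hgate - conjMap (Hgate * Zgate)) (Fin 2)
        (vecMulVec plusZero (star plusZero)) =
      diagonal (fun p =>
        ((Pi.single (0, 0) 1 - Pi.single (1, 0) 1 : Fin 2 × Fin 2 → ℝ) p : ℂ)) := by
  rw [tensorExt_sub, tensorExt_conjMap, tensorExt_conjMap, mul_vecMulVec_star_mul_conjTranspose,
    mul_vecMulVec_star_mul_conjTranspose, Hgate_kronecker_one_mulVec_plusZero,
    HZgate_kronecker_one_mulVec_plusZero]
  simp only [Pi.star_single, star_one, ← single_eq_single_vecMulVec_single, ← diagonal_single]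
  rw [diagonal_sub]
  congr 1
  ext p
  simp [Pi.single_apply, apply_ite Complex.ofReal]

/-- For `E = H∘H` and `E' = HZ∘ZH`, the ordinary diamond norm equals 1. -/
theorem diamond_H_HZ :
    Diamond (conjMap Hgate - conjMap (Hgate * Zgate)) = 1 := by
  refine IsGreatest.csSup_eq ⟨⟨vecMulVec plusZero (star plusZero),
    posSemidef_vecMulVec_self_star _, trace_vecMulVec_plusZero, ?_, ?_⟩, ?_⟩
  · rw [one_kronecker_one, one_mul, trace_vecMulVec_plusZero, Complex.one_re]
    exact zero_le_one
  · rw [tensorExt_H_sub_HZ_plusZero, traceNorm_diagonal]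
    norm_num [Fintype.sum_prod_type, Pi.single_apply]
  · rintro x ⟨ρ, hρ, htr, -, rfl⟩
    exact half_traceNorm_tensorExt_conjMap_sub_le_one Hgate_mem_unitary
      (mul_mem Hgate_mem_unitary Zgate_mem_unitary) hρ htr
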